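/- Let A ∈ ℝ^{m×n}, x̂ > 0, σ̂ > 0, and let p attain min_{1≤i≤n} x̂_i with x̂_p ≤ min_{1≤i≤m} σ̂_i/‖a_i‖₁. Then every (y, c, ε, ε^σ) with ε, ε^σ ≥ 0 satisfying (A^T y)_j + ε_j/x̂_j = c_j for all j, y_i + ε^σ_i/σ̂_i = 0 for all i, and ‖c‖₁ = 1, has objective Σ_j ε_j + Σ_i ε^σ_i ≥ x̂_p. -/

import Mathlib

/-!
Write `ε_j = x̂_j (c_j - (Aᵀy)_j)` and `εσ_i = σ̂_i |y_i|`. Since `x̂_j ≥ x̂_p` and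
`|c_j| - |(Aᵀy)_j| ≤ c_j - (Aᵀy)_j`, the `ε` part is at least `x̂_p (‖c‖₁ - ‖Aᵀy‖₁)`;
since `σ̂_i ≥ x̂_p ‖a_i‖₁` and `‖Aᵀy‖₁ ≤ Σ_i ‖a_i‖₁ |y_i|`, the `εσ` part is at least
`x̂_p ‖Aᵀy‖₁`. Adding the two and using `‖c‖₁ = 1` gives `x̂_p`.
-/

open Matrix

lemma mul_abs_sub_abs_le_of_add_div_eq {t x a c e : ℝ} (ht : 0 ≤ t) (htx : t ≤ x) (he : 0 ≤ e)
    (h : a + e / x = c) : t * (|c| - |a|) ≤ e := by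
  rcases ht.eq_or_lt with rfl | ht_pos
  · simpa using he
  have hx : 0 < x := ht_pos.trans_le htx
  have he_eq : e = x * (c - a) := by
    rw [← h]
    field_simp
    ring
  have hca : 0 ≤ c - a := by rw [← h]; simp only [add_sub_cancel_left]; positivity
  calc t * (|c| - |a|) ≤ t * (c - a) := by
        refine mul_le_mul_of_nonneg_left ?_ ht
        rw [← abs_of_nonneg hca]
        exact abs_sub_abs_le_abs_sub c a
    _ ≤ x * (c - a) := by gcongr
    _ = e := he_eq.symm

lemma mul_mul_abs_le_of_add_div_eq_zero {t s σ y e : ℝ} (hts : t * s ≤ σ) (he : 0 ≤ e)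
    (h : y + e / σ = 0) : t * (s * |y|) ≤ e := by
  rcases eq_or_ne σ 0 with rfl | hσ
  · obtain rfl : y = 0 := by simpa using h
    simpa using he
  have he_eq : e = -(σ * y) := by
    field_simp at h
    linarith
  have hσy : σ * y ≤ 0 := by linarith
  calc t * (s * |y|) = (t * s) * |y| := by ring
    _ ≤ |σ| * |y| := by gcongr; exact hts.trans (le_abs_self σ)
    _ = e := by rw [← abs_mul, abs_of_nonpos hσy, he_eq]

lemma sum_abs_transpose_mulVec_le {m n : Type*} [Fintype m] [Fintype n]
    (A : Matrix m n ℝ) (y : m → ℝ) :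
    ∑ j, |(Aᵀ *ᵥ y) j| ≤ ∑ i, (∑ j, |A i j|) * |y i| :=
  calc ∑ j, |(Aᵀ *ᵥ y) j| ≤ ∑ j, ∑ i, |A i j * y i| := by
        gcongr with j
        exact Finset.abs_sum_le_sum_abs _ _
    _ = ∑ i, (∑ j, |A i j|) * |y i| := by
        rw [Finset.sum_comm]
        simp only [abs_mul, Finset.sum_mul]

lemma mul_le_of_le_div_of_pos {t σ s : ℝ} (ht : 0 < t) (h : t ≤ σ / s) (hs : 0 ≤ s) :
    t * s ≤ σ := by
  rcases hs.eq_or_lt with rfl | hs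
  · simp only [div_zero] at h
    linarith
  · exact (le_div_iff₀ hs).mp h

theorem stmt_13_general (m n : ℕ) (A : Matrix (Fin m) (Fin n) ℝ)
    (xhat : Fin n → ℝ)
    (σhat : Fin m → ℝ)
    (p : Fin n) (hpmin : ∀ j, xhat p ≤ xhat j)
    (hcase : ∀ i, xhat p ≤ σhat i / ∑ j, |A i j|)
    (y : Fin m → ℝ) (c ε : Fin n → ℝ) (εσ : Fin m → ℝ)
    (hε : ∀ j, 0 ≤ ε j) (hεσ : ∀ i, 0 ≤ εσ i)
    (h1 : ∀ j, Aᵀ.mulVec y j + ε j / xhat j = c j)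
    (h2 : ∀ i, y i + εσ i / σhat i = 0)
    (hnorm : ∑ j, |c j| = 1) :
    xhat p ≤ ∑ j, ε j + ∑ i, εσ i := by
  have hε_sum : 0 ≤ ∑ j, ε j := Finset.sum_nonneg fun j _ ↦ hε j
  have hεσ_sum : 0 ≤ ∑ i, εσ i := Finset.sum_nonneg fun i _ ↦ hεσ i
  rcases le_or_gt (xhat p) 0 with hp | hp
  · linarith
  set S := ∑ j, |(Aᵀ *ᵥ y) j|
  have primal : xhat p * (1 - S) ≤ ∑ j, ε j := by
    rw [← hnorm, ← Finset.sum_sub_distrib, Finset.mul_sum]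
    gcongr with j
    exact mul_abs_sub_abs_le_of_add_div_eq hp.le (hpmin j) (hε j) (h1 j)
  have dual : xhat p * S ≤ ∑ i, εσ i :=
    calc xhat p * S ≤ xhat p * ∑ i, (∑ j, |A i j|) * |y i| := by
          gcongr
          exact sum_abs_transpose_mulVec_le A y
      _ ≤ ∑ i, εσ i := by
          rw [Finset.mul_sum]
          gcongr with i
          refine mul_mul_abs_le_of_add_div_eq_zero ?_ (hεσ i) (h2 i)
          exact mul_le_of_le_div_of_pos hp (hcase i) (by positivity)
  linarith

/-- Lower-bound half of Proposition 4(c): if p attains min_j x̂_j and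
x̂_p ≤ min_i σ̂_i/‖a_i‖₁, every feasible solution of [IOP2(x̂, σ̂)] has objective
at least x̂_p. -/
theorem stmt_13 (m n : ℕ) (A : Matrix (Fin m) (Fin n) ℝ)
    (xhat : Fin n → ℝ) (hx : ∀ j, 0 < xhat j)
    (σhat : Fin m → ℝ) (hσ : ∀ i, 0 < σhat i)
    (p : Fin n) (hpmin : ∀ j, xhat p ≤ xhat j)
    (hcase : ∀ i, xhat p ≤ σhat i / ∑ j, |A i j|)
    (y : Fin m → ℝ) (c ε : Fin n → ℝ) (εσ : Fin m → ℝ)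
    (hε : ∀ j, 0 ≤ ε j) (hεσ : ∀ i, 0 ≤ εσ i)
    (h1 : ∀ j, Aᵀ.mulVec y j + ε j / xhat j = c j)
    (h2 : ∀ i, y i + εσ i / σhat i = 0)
    (hnorm : ∑ j, |c j| = 1) :
    xhat p ≤ ∑ j, ε j + ∑ i, εσ i :=
  stmt_13_general m n A xhat σhat p hpmin hcase y c ε εσ hε hεσ h1 h2 hnorm
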